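/- For every v in G(B_t(u)), the monomial prime ideal P_{[n]∖supp_t(v)} contains B_t(u) and is a minimal prime of B_t(u). -/

import Mathlib

open Finset MvPolynomial

/-! Common definitions for principal vector-spread Borel ideals
(Crupi–Ficarra–Lax, "Principal vector-spread Borel ideals").

Throughout, `S = K[x_1,…,x_n]` is realized as `MvPolynomial (Fin n) K`, and the
variable `x_p` (1-based position `p ∈ [1,n]`) is `X (p-1)`. -/

/-- The variable `x_p` of `K[x_1,…,x_n]`, for a 1-based position `p ∈ [1,n]`. -/
noncomputable def xv (K : Type*) [Field K] (n : ℕ) [NeZero n] (p : ℕ) :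
    MvPolynomial (Fin n) K := MvPolynomial.X (Fin.ofNat n (p - 1 : ℕ))

/-- The squarefree monomial `x_{i 1} ⋯ x_{i e}` determined by the index function `i`. -/
noncomputable def monOf (K : Type*) [Field K] (n : ℕ) [NeZero n] (e : ℕ) (i : ℕ → ℕ) :
    MvPolynomial (Fin n) K := ∏ r ∈ Finset.Icc 1 e, xv K n (i r)

/-- Index functions of the `t`-spread monomials `x_{i 1} ⋯ x_{i e}` with `i r ≤ J r` for
all `r = 1,…,e`.  (These monomials form the minimal monomial generating set of the
principal `t`-spread Borel ideal `B_t(x_{J 1} ⋯ x_{J e})`.) -/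
def spreadIdx (e : ℕ) (t J : ℕ → ℕ) : Set (ℕ → ℕ) :=
  {i | (∀ r, 1 ≤ r → r ≤ e → 1 ≤ i r ∧ i r ≤ J r) ∧
    (∀ r, 1 ≤ r → r + 1 ≤ e → i r + t r ≤ i (r + 1))}

/-- The principal `t`-spread Borel ideal `B_t(x_{J 1} ⋯ x_{J e})`: the ideal generated by
all `t`-spread monomials `x_{i 1} ⋯ x_{i e}` with `i r ≤ J r` for all `r`. -/
noncomputable def tBorel (K : Type*) [Field K] (n : ℕ) [NeZero n] (e : ℕ) (t J : ℕ → ℕ) :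
    Ideal (MvPolynomial (Fin n) K) :=
  Ideal.span ((fun i => monOf K n e i) '' spreadIdx e t J)

/-- The monomial prime ideal `P_A = (x_p : p ∈ A)`, for a set `A` of 1-based positions. -/
noncomputable def pA (K : Type*) [Field K] (n : ℕ) [NeZero n] (A : Set ℕ) :
    Ideal (MvPolynomial (Fin n) K) := Ideal.span (xv K n '' A)

/-- The `t`-spread support `supp_t(x_{i 1} ⋯ x_{i e}) = ⋃_{s=1}^{e-1} [i s, i s + t s - 1]`. -/
def tSupp (e : ℕ) (t : ℕ → ℕ) (i : ℕ → ℕ) : Set ℕ :=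
  ⋃ s ∈ Finset.Icc 1 (e - 1), Set.Icc (i s) (i s + t s - 1)

/-- The `k`-th symbolic power of a (squarefree monomial) ideal: the intersection of the
`k`-th powers of its minimal primes. -/
noncomputable def symbPow {R : Type*} [CommRing R] (I : Ideal R) (k : ℕ) : Ideal R :=
  ⨅ P ∈ I.minimalPrimes, P ^ k

/-- The Alexander dual `⨅_{v} P_{supp v}` of the squarefree monomial ideal whose minimal
monomial generators are the degree `e` squarefree monomials indexed by `gen`. -/
noncomputable def alexDualOf (K : Type*) [Field K] (n : ℕ) [NeZero n] (e : ℕ)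
    (gen : Set (ℕ → ℕ)) : Ideal (MvPolynomial (Fin n) K) :=
  ⨅ i ∈ gen, pA K n (i '' Set.Icc 1 e)

/-- The height of an ideal: the infimum of the heights of its minimal primes, the height
of a prime being its height in the poset of prime ideals. -/
noncomputable def idealHeight {R : Type*} [CommRing R] (I : Ideal R) : ℕ∞ :=
  ⨅ (p : PrimeSpectrum R) (_ : p.asIdeal ∈ I.minimalPrimes), Order.height p

/-- The depth of the module `M` with respect to the ideal `P`: the supremum of the lengths
of `M`-regular sequences consisting of elements of `P`. -/
noncomputable def depthWrt (R : Type*) (M : Type*) [CommRing R] [AddCommGroup M]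
    [Module R M] (P : Ideal R) : ℕ∞ :=
  ⨆ (k : ℕ) (_ : ∃ x : Fin k → R, (∀ a, x a ∈ P) ∧
    RingTheory.Sequence.IsRegular M (List.ofFn x)), (k : ℕ∞)

/-- The (Krull) dimension of a module `M`: the Krull dimension of `R / ann M`. -/
noncomputable def modKrullDim (R : Type*) (M : Type*) [CommRing R] [AddCommGroup M]
    [Module R M] : WithBot ℕ∞ := ringKrullDim (R ⧸ Module.annihilator R M)

/-- A module is Cohen–Macaulay (with respect to the ideal `P`, e.g. the graded maximal
ideal) if its depth equals its Krull dimension. -/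
def IsCohenMacaulayMod (R : Type*) (M : Type*) [CommRing R] [AddCommGroup M] [Module R M]
    (P : Ideal R) : Prop := (depthWrt R M P : WithBot ℕ∞) = modKrullDim R M

/-- The depth of a local ring: max length of a regular sequence in the maximal ideal. -/
noncomputable def ringDepth (A : Type*) [CommRing A] [IsLocalRing A] : ℕ∞ :=
  depthWrt A A (IsLocalRing.maximalIdeal A)

/-- A local ring is Cohen–Macaulay if its depth equals its Krull dimension. -/
def IsCohenMacaulayLocalRing (A : Type*) [CommRing A] [IsLocalRing A] : Prop :=
  (ringDepth A : WithBot ℕ∞) = ringKrullDim A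

/-- A (commutative Noetherian) ring is Cohen–Macaulay if all its localizations at prime
ideals are Cohen–Macaulay local rings. -/
def IsCohenMacaulayRing (A : Type*) [CommRing A] : Prop :=
  ∀ (P : Ideal A) (hP : P.IsPrime), haveI := hP
    IsCohenMacaulayLocalRing (Localization.AtPrime P)

/-- The analytic spread of `I`: the Krull dimension of `R(I)/m R(I)`, where `R(I)` is the
Rees algebra of `I` and `m` the (graded maximal) ideal. -/
noncomputable def analyticSpread {R : Type*} [CommRing R] (m I : Ideal R) : WithBot ℕ∞ :=
  ringKrullDim (↥(reesAlgebra I) ⧸ Ideal.map (algebraMap R ↥(reesAlgebra I)) m)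

/-- `{p,q}` is an edge of the linear relation graph of the monomial ideal whose minimal
generators are the degree `e` squarefree monomials indexed by `gen` (positions 1-based,
within `[1,n]`). -/
def lrEdge (K : Type*) [Field K] (n : ℕ) [NeZero n] (e : ℕ) (gen : Set (ℕ → ℕ))
    (p q : ℕ) : Prop :=
  1 ≤ p ∧ p ≤ n ∧ 1 ≤ q ∧ q ≤ n ∧ p ≠ q ∧
    ∃ i ∈ gen, ∃ i' ∈ gen, xv K n p * monOf K n e i = xv K n q * monOf K n e i'

/-- A facet of a simplicial complex: a maximal face. -/
def isFacet (Δ : Set (Finset ℕ)) (F : Finset ℕ) : Prop :=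
  F ∈ Δ ∧ ∀ G ∈ Δ, F ⊆ G → F = G

/-- Vertex decomposability of a simplicial complex (faces as finsets of vertices):
either a simplex (including the void complex and `{∅}`), or there is a vertex whose
deletion and link are vertex decomposable and every facet of the deletion is a facet. -/
inductive VDecomp : Set (Finset ℕ) → Prop
  | empty : VDecomp ∅
  | simplex (A : Finset ℕ) : VDecomp {F | F ⊆ A}
  | step (Δ : Set (Finset ℕ)) (v : ℕ) (hv : ∃ F ∈ Δ, v ∈ F)
      (hdel : VDecomp {F ∈ Δ | v ∉ F})
      (hlink : VDecomp {F | F ∈ Δ ∧ v ∉ F ∧ insert v F ∈ Δ})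
      (hfac : ∀ F, isFacet {F ∈ Δ | v ∉ F} F → isFacet Δ F) : VDecomp Δ

/-- The `a`-th layer `J (a+1) / J a` of a filtration of ideals, as an `R`-module. -/
abbrev layerOf {R : Type*} [CommRing R] {r : ℕ} (J : Fin (r + 1) → Ideal R) (a : Fin r) :=
  ↥(J a.succ) ⧸ (Submodule.comap (J a.succ).subtype (J a.castSucc))

/-! A monomial prime `P_A` contains `B_t(u)` when every generator has an index in `A`, and it is
then minimal as soon as each `p ∈ A` lies on a generator whose other indices all avoid `A`:
a prime `Q` with `B_t(u) ⊆ Q ⊆ P_A` contains that generator, hence one of its variables,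
which can only be `x_p`. For `A = [n] ∖ supp_t(v)` both conditions are combinatorial facts
about `t`-spread sequences below `u`; the generator through `p` follows `v` up to `p` and then
stays inside the blocks `[i_s, i_s + t_s - 1]` of `supp_t(v)`. -/

namespace MvPolynomial

variable {σ R : Type*} [CommRing R]

open Classical in
noncomputable def killVars (s : Set σ) : MvPolynomial σ R →ₐ[R] MvPolynomial σ R :=
  aeval fun c => if c ∈ s then 0 else X c

open Classical in
lemma killVars_X (s : Set σ) (c : σ) :
    killVars s (X c : MvPolynomial σ R) = if c ∈ s then 0 else X c :=
  aeval_X _ c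

lemma ker_killVars (s : Set σ) :
    RingHom.ker (killVars s : MvPolynomial σ R →ₐ[R] MvPolynomial σ R) =
      Ideal.span (X '' s) := by
  classical
  refine le_antisymm (fun f hf => ?_) ?_
  · have sub_mem : ∀ g : MvPolynomial σ R, g - killVars s g ∈ Ideal.span (X '' s) := by
      intro g
      induction g using MvPolynomial.induction_on with
      | C a => simp
      | add p q hp hq =>
        rw [map_add, ← sub_add_sub_comm]
        exact add_mem hp hq
      | mul_X p c hp =>
        rw [map_mul, killVars_X]
        by_cases hc : c ∈ s
        · rw [if_pos hc, mul_zero, sub_zero]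
          exact Ideal.mul_mem_left _ p (Ideal.subset_span ⟨c, hc, rfl⟩)
        · rw [if_neg hc, ← sub_mul]
          exact Ideal.mul_mem_right _ _ hp
    simpa [RingHom.mem_ker.mp hf] using sub_mem f
  · rw [Ideal.span_le]
    rintro _ ⟨c, hc, rfl⟩
    simp [killVars_X, hc]

lemma isPrime_span_X_image [IsDomain R] (s : Set σ) :
    (Ideal.span (X '' s : Set (MvPolynomial σ R))).IsPrime :=
  ker_killVars (R := R) s ▸ RingHom.ker_isPrime _

lemma X_mem_span_X_image_iff [Nontrivial R] {s : Set σ} {c : σ} :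
    (X c : MvPolynomial σ R) ∈ Ideal.span (X '' s) ↔ c ∈ s := by
  classical
  rw [mem_ideal_span_X_image]
  simp [support_X, Finsupp.single_apply]

end MvPolynomial

section MonomialPrimes

variable {K : Type*} [Field K] {n : ℕ} [NeZero n]

lemma pA_eq_span_X_image (A : Set ℕ) :
    pA K n A = Ideal.span (X '' ((fun p => Fin.ofNat n (p - 1)) '' A)) := by
  rw [pA, Set.image_image]
  rfl

lemma pA_isPrime (A : Set ℕ) : (pA K n A).IsPrime := by
  rw [pA_eq_span_X_image]
  exact isPrime_span_X_image _

lemma xv_mem_pA_iff {A : Set ℕ} (hA : A ⊆ Set.Icc 1 n) {q : ℕ} (hq : q ∈ Set.Icc 1 n) :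
    xv K n q ∈ pA K n A ↔ q ∈ A := by
  refine ⟨fun h => ?_, fun h => Ideal.subset_span ⟨q, h, rfl⟩⟩
  rw [pA_eq_span_X_image, xv, X_mem_span_X_image_iff] at h
  obtain ⟨a, ha, hEq⟩ := h
  obtain ⟨⟨ha1, han⟩, ⟨hq1, hqn⟩⟩ := And.intro (hA ha) hq
  have : a - 1 = q - 1 := by
    simpa [Fin.ext_iff, Nat.mod_eq_of_lt (show a - 1 < n by omega),
      Nat.mod_eq_of_lt (show q - 1 < n by omega)] using hEq
  rwa [show q = a by omega]

lemma monOf_mem_iff {P : Ideal (MvPolynomial (Fin n) K)} [P.IsPrime] {e : ℕ} {i : ℕ → ℕ} :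
    monOf K n e i ∈ P ↔ ∃ r ∈ Finset.Icc 1 e, xv K n (i r) ∈ P :=
  Ideal.IsPrime.prod_mem_iff

lemma span_monOf_le_pA {e : ℕ} {G : Set (ℕ → ℕ)} {A : Set ℕ}
    (hG : ∀ i ∈ G, ∃ r ∈ Finset.Icc 1 e, i r ∈ A) :
    Ideal.span ((fun i => monOf K n e i) '' G) ≤ pA K n A := by
  have := pA_isPrime (K := K) (n := n) A
  rw [Ideal.span_le]
  rintro _ ⟨i, hi, rfl⟩
  obtain ⟨r, hr, hrA⟩ := hG i hi
  exact monOf_mem_iff.mpr ⟨r, hr, Ideal.subset_span ⟨i r, hrA, rfl⟩⟩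

lemma pA_mem_minimalPrimes {e : ℕ} {G : Set (ℕ → ℕ)} {A : Set ℕ} (hA : A ⊆ Set.Icc 1 n)
    (hGn : ∀ i ∈ G, ∀ r ∈ Finset.Icc 1 e, i r ∈ Set.Icc 1 n)
    (hG : ∀ i ∈ G, ∃ r ∈ Finset.Icc 1 e, i r ∈ A)
    (hGA : ∀ p ∈ A, ∃ i ∈ G, ∀ r ∈ Finset.Icc 1 e, i r = p ∨ i r ∉ A) :
    pA K n A ∈ (Ideal.span ((fun i => monOf K n e i) '' G)).minimalPrimes := by
  refine ⟨⟨pA_isPrime A, span_monOf_le_pA hG⟩, fun Q ⟨hQ, hIQ⟩ hQA => ?_⟩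
  rw [pA, Ideal.span_le]
  rintro _ ⟨p, hp, rfl⟩
  obtain ⟨i, hi, hiA⟩ := hGA p hp
  obtain ⟨r, hr, hxr⟩ := monOf_mem_iff.mp (hIQ (Ideal.subset_span ⟨i, hi, rfl⟩))
  have hrA : i r ∈ A := (xv_mem_pA_iff hA (hGn i hi r hr)).mp (hQA hxr)
  obtain rfl : i r = p := (hiA r hr).resolve_right (not_not.mpr hrA)
  exact hxr

end MonomialPrimes

section Spread

variable {d : ℕ} {t j i : ℕ → ℕ}

lemma mem_tSupp {e x : ℕ} :
    x ∈ tSupp e t i ↔ ∃ s, 1 ≤ s ∧ s ≤ e - 1 ∧ i s ≤ x ∧ x ≤ i s + t s - 1 := by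
  simp only [tSupp, Set.mem_iUnion, Finset.mem_Icc, Set.mem_Icc, exists_prop, and_assoc]

lemma add_le_of_mem_spreadIdx (ht : ∀ k, 1 ≤ k → k ≤ d - 1 → 1 ≤ t k)
    (hi : i ∈ spreadIdx d t j) {a b : ℕ} (ha : 1 ≤ a) (hab : a < b) (hb : b ≤ d) :
    i a + t a ≤ i b := by
  induction b, hab using Nat.le_induction with
  | base => exact hi.2 a ha hb
  | succ b hab ih =>
    have := hi.2 b (by omega) hb
    have := ht b (by omega) (by omega)
    have := ih (by omega)
    omega

lemma le_of_mem_spreadIdx (ht : ∀ k, 1 ≤ k → k ≤ d - 1 → 1 ≤ t k)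
    (hi : i ∈ spreadIdx d t j) {a b : ℕ} (ha : 1 ≤ a) (hab : a ≤ b) (hb : b ≤ d) :
    i a ≤ i b := by
  rcases hab.eq_or_lt with rfl | hab
  · rfl
  · have := add_le_of_mem_spreadIdx ht hi ha hab hb
    omega

lemma mem_Icc_of_mem_spreadIdx (ht : ∀ k, 1 ≤ k → k ≤ d - 1 → 1 ≤ t k)
    {n : ℕ} (hjd : j d = n) (hi : i ∈ spreadIdx d t j) {r : ℕ} (hr : r ∈ Finset.Icc 1 d) :
    i r ∈ Set.Icc 1 n := by
  rw [Finset.mem_Icc] at hr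
  have := le_of_mem_spreadIdx ht hi hr.1 hr.2 le_rfl
  have := hi.1 r hr.1 hr.2
  have := hi.1 d (by omega) le_rfl
  exact ⟨by omega, by omega⟩

/-- Either `i'` drops below `i` somewhere, and then its first such entry lies strictly between
two blocks of `supp_t(i)`, or it dominates `i`, and then its last entry is beyond them all. -/
lemma exists_not_mem_tSupp (ht : ∀ k, 1 ≤ k → k ≤ d - 1 → 1 ≤ t k) (hd : 1 ≤ d)
    {i' : ℕ → ℕ} (hi : i ∈ spreadIdx d t j) (hi' : i' ∈ spreadIdx d t j) :
    ∃ r ∈ Finset.Icc 1 d, i' r ∉ tSupp d t i := by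
  classical
  simp only [Finset.mem_Icc, mem_tSupp, not_exists, not_and]
  by_cases hdrop : ∃ r, 1 ≤ r ∧ r ≤ d ∧ i' r < i r
  · obtain ⟨hr1, hrd, hlt⟩ := Nat.find_spec hdrop
    refine ⟨Nat.find hdrop, ⟨hr1, hrd⟩, fun s hs1 hsd hsl hsr => ?_⟩
    have := ht s hs1 hsd
    rcases Nat.lt_or_ge s (Nat.find hdrop) with hs | hs
    · have := Nat.find_min hdrop hs
      have := add_le_of_mem_spreadIdx ht hi' hs1 hs hrd
      omega
    · have := le_of_mem_spreadIdx ht hi hr1 hs (by omega)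
      omega
  · push Not at hdrop
    refine ⟨d, ⟨hd, le_rfl⟩, fun s hs1 hsd hsl hsr => ?_⟩
    have := ht s hs1 hsd
    have := add_le_of_mem_spreadIdx ht hi hs1 (by omega) le_rfl
    have := hdrop d hd le_rfl
    omega

/-- The witness `s` is the last position among `1, …, d - 1` with `i s ≤ p`, or `0`. -/
lemma exists_gap_of_not_mem_tSupp {p : ℕ} (ht : ∀ k, 1 ≤ k → k ≤ d - 1 → 1 ≤ t k)
    (hp : p ∉ tSupp d t i) :
    ∃ s ≤ d - 1, (1 ≤ s → i s + t s ≤ p) ∧ (s + 1 ≤ d - 1 → p < i (s + 1)) := by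
  classical
  obtain ⟨s, hs⟩ : ∃ s, Nat.findGreatest (fun q => i q ≤ p) (d - 1) = s := ⟨_, rfl⟩
  have hsd : s ≤ d - 1 := hs ▸ Nat.findGreatest_le _
  refine ⟨s, hsd, fun hs1 => ?_, fun hsd' => ?_⟩
  · have hsp : i s ≤ p := Nat.findGreatest_of_ne_zero (P := fun q => i q ≤ p) hs (by omega)
    have := ht s hs1 hsd
    by_contra hlt
    exact hp (mem_tSupp.mpr ⟨s, hs1, hsd, hsp, by omega⟩)
  · exact lt_of_not_ge (Nat.findGreatest_is_greatest (P := fun q => i q ≤ p) (by omega) hsd')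

/-- The generator through `p`: it agrees with `i` up to position `s`, takes the value `p` at
`s + 1`, and then each entry is the least one allowed by `t`-spreadness and by `i`, which keeps
the entry at position `r + 1` in the block `[i r, i r + t r - 1]` (`fillThrough_succ_mem_block`). -/
def fillThrough (i t : ℕ → ℕ) (s p : ℕ) : ℕ → ℕ
  | 0 => i 0
  | r + 1 =>
    if r + 1 ≤ s then i (r + 1) else if r = s then p else max (i r) (fillThrough i t s p r + t r)

section Fill

variable {s p : ℕ}

lemma fillThrough_of_le {r : ℕ} (hr : r ≤ s) : fillThrough i t s p r = i r := by
  cases r with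
  | zero => rfl
  | succ r => exact if_pos hr

lemma fillThrough_succ_self : fillThrough i t s p (s + 1) = p := by
  simp [fillThrough]

lemma fillThrough_succ_of_lt {r : ℕ} (hr : s < r) :
    fillThrough i t s p (r + 1) = max (i r) (fillThrough i t s p r + t r) := by
  simp only [fillThrough]
  rw [if_neg (by omega), if_neg (by omega)]

lemma fillThrough_lt (ht : ∀ k, 1 ≤ k → k ≤ d - 1 → 1 ≤ t k) (hi : i ∈ spreadIdx d t j)
    (hnext : s + 1 ≤ d - 1 → p < i (s + 1)) {r : ℕ} (hsr : s + 1 ≤ r) (hrd : r ≤ d - 1) :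
    fillThrough i t s p r < i r := by
  induction r, hsr using Nat.le_induction with
  | base => rw [fillThrough_succ_self]; exact hnext hrd
  | succ r hsr ih =>
    have := ih (by omega)
    have := hi.2 r (by omega) (by omega)
    have := ht r (by omega) (by omega)
    rw [fillThrough_succ_of_lt (by omega)]
    omega

lemma fillThrough_succ_mem_block (ht : ∀ k, 1 ≤ k → k ≤ d - 1 → 1 ≤ t k)
    (hi : i ∈ spreadIdx d t j) (hnext : s + 1 ≤ d - 1 → p < i (s + 1)) {r : ℕ}
    (hsr : s + 1 ≤ r) (hrd : r ≤ d - 1) :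
    i r ≤ fillThrough i t s p (r + 1) ∧ fillThrough i t s p (r + 1) ≤ i r + t r - 1 := by
  have := fillThrough_lt ht hi hnext hsr hrd
  have := ht r (by omega) hrd
  rw [fillThrough_succ_of_lt (by omega)]
  omega

lemma fillThrough_mem_spreadIdx (ht : ∀ k, 1 ≤ k → k ≤ d - 1 → 1 ≤ t k) (hi : i ∈ spreadIdx d t j)
    (hsp : 1 ≤ s → i s + t s ≤ p) (hnext : s + 1 ≤ d - 1 → p < i (s + 1))
    (hp : 1 ≤ p) (hpj : p ≤ j (s + 1)) :
    fillThrough i t s p ∈ spreadIdx d t j := by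
  constructor
  · intro r hr1 hrd
    rcases lt_trichotomy r (s + 1) with hr | rfl | hr
    · rw [fillThrough_of_le (by omega)]
      exact hi.1 r hr1 hrd
    · rw [fillThrough_succ_self]
      exact ⟨hp, hpj⟩
    · obtain ⟨r, rfl⟩ : ∃ r', r = r' + 1 := ⟨r - 1, by omega⟩
      have := fillThrough_succ_mem_block ht hi hnext (r := r) (by omega) (by omega)
      have := hi.1 r (by omega) (by omega)
      have := hi.2 r (by omega) hrd
      have := hi.1 (r + 1) hr1 hrd
      exact ⟨by omega, by omega⟩
  · intro r hr1 hrd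
    rcases lt_trichotomy r s with hr | rfl | hr
    · rw [fillThrough_of_le (by omega), fillThrough_of_le (by omega)]
      exact hi.2 r hr1 hrd
    · rw [fillThrough_of_le le_rfl, fillThrough_succ_self]
      exact hsp hr1
    · rw [fillThrough_succ_of_lt hr]
      exact le_max_right _ _

lemma fillThrough_eq_or_mem_tSupp (ht : ∀ k, 1 ≤ k → k ≤ d - 1 → 1 ≤ t k) (hi : i ∈ spreadIdx d t j)
    (hs : s ≤ d - 1) (hnext : s + 1 ≤ d - 1 → p < i (s + 1)) {r : ℕ} (hr : r ∈ Finset.Icc 1 d) :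
    fillThrough i t s p r = p ∨ fillThrough i t s p r ∈ tSupp d t i := by
  rw [Finset.mem_Icc] at hr
  rcases lt_trichotomy r (s + 1) with hrs | rfl | hrs
  · right
    have := ht r hr.1 (by omega)
    rw [fillThrough_of_le (by omega)]
    exact mem_tSupp.mpr ⟨r, hr.1, by omega, le_rfl, by omega⟩
  · exact Or.inl fillThrough_succ_self
  · right
    obtain ⟨r, rfl⟩ : ∃ r', r = r' + 1 := ⟨r - 1, by omega⟩
    obtain ⟨hlo, hhi⟩ := fillThrough_succ_mem_block ht hi hnext (r := r) (by omega) (by omega)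
    exact mem_tSupp.mpr ⟨r, by omega, by omega, hlo, hhi⟩

end Fill

lemma exists_mem_spreadIdx_forall_eq_or_mem_tSupp (ht : ∀ k, 1 ≤ k → k ≤ d - 1 → 1 ≤ t k)
    (hd : 1 ≤ d) {n : ℕ} (hjd : j d = n) (hi : i ∈ spreadIdx d t j) {p : ℕ}
    (hp : p ∈ Set.Icc 1 n) (hps : p ∉ tSupp d t i) :
    ∃ i' ∈ spreadIdx d t j, ∀ r ∈ Finset.Icc 1 d, i' r = p ∨ i' r ∈ tSupp d t i := by
  obtain ⟨s, hs, hsp, hnext⟩ := exists_gap_of_not_mem_tSupp ht hps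
  have hpj : p ≤ j (s + 1) := by
    by_cases hsd : s + 1 ≤ d - 1
    · have := hnext hsd
      have := hi.1 (s + 1) (by omega) (by omega)
      omega
    · rw [show s + 1 = d by omega, hjd]
      exact hp.2
  exact ⟨fillThrough i t s p, fillThrough_mem_spreadIdx ht hi hsp hnext hp.1 hpj,
    fun r hr => fillThrough_eq_or_mem_tSupp ht hi hs hnext hr⟩

end Spread

theorem stmt2_general (K : Type*) [Field K] (n d : ℕ) [NeZero n] (t j : ℕ → ℕ)
    (hd : 2 ≤ d) (ht : ∀ k, 1 ≤ k → k ≤ d - 1 → 1 ≤ t k)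
    (hjd : j d = n) :
    ∀ i ∈ spreadIdx d t j,
      tBorel K n d t j ≤ pA K n (Set.Icc 1 n \ tSupp d t i) ∧
      pA K n (Set.Icc 1 n \ tSupp d t i) ∈ (tBorel K n d t j).minimalPrimes := by
  intro i hi
  have hd1 : 1 ≤ d := by omega
  have hbounds : ∀ i' ∈ spreadIdx d t j, ∀ r ∈ Finset.Icc 1 d, i' r ∈ Set.Icc 1 n :=
    fun i' hi' r hr => mem_Icc_of_mem_spreadIdx ht hjd hi' hr
  have hescape :
      ∀ i' ∈ spreadIdx d t j, ∃ r ∈ Finset.Icc 1 d, i' r ∈ Set.Icc 1 n \ tSupp d t i := by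
    intro i' hi'
    obtain ⟨r, hr, hrs⟩ := exists_not_mem_tSupp ht hd1 hi hi'
    exact ⟨r, hr, hbounds i' hi' r hr, hrs⟩
  have hcover : ∀ p ∈ Set.Icc 1 n \ tSupp d t i, ∃ i' ∈ spreadIdx d t j,
      ∀ r ∈ Finset.Icc 1 d, i' r = p ∨ i' r ∉ Set.Icc 1 n \ tSupp d t i := by
    rintro p ⟨hp, hps⟩
    obtain ⟨i', hi', hcov⟩ := exists_mem_spreadIdx_forall_eq_or_mem_tSupp ht hd1 hjd hi hp hps
    exact ⟨i', hi', fun r hr => (hcov r hr).imp_right fun hrs hrA => hrA.2 hrs⟩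
  exact ⟨span_monOf_le_pA hescape,
    pA_mem_minimalPrimes Set.sdiff_subset hbounds hescape hcover⟩

/-- For every generator `v ∈ G(B_t(u))` (given by its index function `i`), the monomial
prime `P_{[n]∖supp_t(v)}` contains `B_t(u)` and is a minimal prime of `B_t(u)`. -/
theorem stmt2 (K : Type*) [Field K] (n d : ℕ) [NeZero n] (t j : ℕ → ℕ)
    (hd : 2 ≤ d) (ht : ∀ k, 1 ≤ k → k ≤ d - 1 → 1 ≤ t k)
    (hj1 : 1 ≤ j 1) (hjmono : ∀ p q, 1 ≤ p → p < q → q ≤ d → j p < j q)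
    (hjd : j d = n) (hspread : ∀ k, 1 ≤ k → k ≤ d - 1 → j k + t k ≤ j (k + 1)) :
    ∀ i ∈ spreadIdx d t j,
      tBorel K n d t j ≤ pA K n (Set.Icc 1 n \ tSupp d t i) ∧
      pA K n (Set.Icc 1 n \ tSupp d t i) ∈ (tBorel K n d t j).minimalPrimes :=
  stmt2_general K n d t j hd ht hjd
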